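/- arXiv:1509.00796 — 5 statements merged into one kernel-verified Lean document; each statement's English description precedes it below -/
import Mathlib

section
/- Let (Q, +) be an abelian group, φ, ψ automorphisms of (Q, +), and b ∈ Q. Define x · y = φ(x) + ψ(y) + b. Then (Q, ·) satisfies the identity x · (y · (y · x)) = y for all x, y if and only if φ = -ψ³ (i.e., φ(x) = -ψ³(x) for all x), ψ⁵ + ψ⁴ + 1 = 0 (i.e., ψ⁵(x) + ψ⁴(x) + x = 0 for all x), and ψ²(b) + ψ(b) + b = 0. -/
theorem t2_T_quasigroup_characterization {Q : Type*} [AddCommGroup Q]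
    (φ ψ : Q ≃+ Q) (b : Q) (mul : Q → Q → Q)
    (hmul : ∀ x y, mul x y = φ x + ψ y + b) :
    (∀ x y, mul x (mul y (mul y x)) = y) ↔
      ((∀ x, φ x = -(ψ (ψ (ψ x)))) ∧
       (∀ x, ψ (ψ (ψ (ψ (ψ x)))) + ψ (ψ (ψ (ψ x))) + x = 0) ∧
       ψ (ψ b) + ψ b + b = 0) := by
  have key : ∀ x y, mul x (mul y (mul y x)) =
      φ x + ψ (φ y) + ψ (ψ (φ y)) + ψ (ψ (ψ x)) + (ψ (ψ b) + ψ b + b) := by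
    intro x y
    simp only [hmul, map_add]
    abel
  constructor
  · intro h
    have h' : ∀ x y, φ x + ψ (φ y) + ψ (ψ (φ y)) + ψ (ψ (ψ x)) + (ψ (ψ b) + ψ b + b) = y := by
      intro x y; rw [← key, h]
    have h0 : ψ (ψ b) + ψ b + b = 0 := by
      have := h' 0 0
      simpa using this
    have hφ : ∀ x, φ x = -(ψ (ψ (ψ x))) := by
      intro x
      have h1 := h' x 0
      simp only [map_zero, h0] at h1
      have h2 : φ x + ψ (ψ (ψ x)) = 0 := by rw [← h1]; abel
      exact eq_neg_of_add_eq_zero_left h2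
    refine ⟨hφ, ?_, h0⟩
    intro y
    have h1 := h' 0 y
    simp only [map_zero, h0, hφ, map_neg] at h1
    calc ψ (ψ (ψ (ψ (ψ y)))) + ψ (ψ (ψ (ψ y))) + y
        = ψ (ψ (ψ (ψ (ψ y)))) + ψ (ψ (ψ (ψ y))) +
          (-0 + -ψ (ψ (ψ (ψ y))) + -ψ (ψ (ψ (ψ (ψ y)))) + 0 + 0) := by rw [h1]
      _ = 0 := by abel
  · rintro ⟨hφ, hψ, h0⟩
    intro x y
    rw [key, hφ x, hφ y, h0]
    simp only [map_neg]
    have h3 := hψ y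
    have h2 : y = -(ψ (ψ (ψ (ψ (ψ y)))) + ψ (ψ (ψ (ψ y)))) := by
      rw [eq_neg_iff_add_eq_zero, ← h3]; abel
    conv_rhs => rw [h2]
    abel
end

section
/- Let (Q, +) be an abelian group, φ, ψ automorphisms of (Q, +). Define x · y = φ(x) + ψ(y). Then (Q, ·) satisfies the identity x · (y · (y · x)) = y for all x, y if and only if φ = -ψ³ and ψ⁵(x) + ψ⁴(x) + x = 0 for all x ∈ Q. -/
theorem t2_T_quasigroup_characterization_no_b {Q : Type*} [AddCommGroup Q]
    (φ ψ : Q ≃+ Q) (mul : Q → Q → Q)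
    (hmul : ∀ x y, mul x y = φ x + ψ y) :
    (∀ x y, mul x (mul y (mul y x)) = y) ↔
      ((∀ x, φ x = -(ψ (ψ (ψ x)))) ∧
       (∀ x, ψ (ψ (ψ (ψ (ψ x)))) + ψ (ψ (ψ (ψ x))) + x = 0)) := by
  simp only [hmul]
  constructor
  · intro h
    have hphi : ∀ x, φ x = -(ψ (ψ (ψ x))) := by
      intro x
      have := h x 0
      simp [map_add] at this
      exact eq_neg_of_add_eq_zero_left this
    refine ⟨hphi, fun y => ?_⟩
    have := h 0 y
    simp [map_add, hphi] at this
    linear_combination (norm := abel1) -this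
  · rintro ⟨h1, h2⟩ x y
    simp [map_add, h1]
    have h := h2 y
    linear_combination (norm := abel1) -h
end

section
/- If a T-quasigroup x · y = φ(x) + ψ(y) + b over an abelian group (Q, +) satisfies the identity x · (y · (y · x)) = y, then φ ∘ ψ = ψ ∘ φ, i.e., the quasigroup is medial. -/
theorem t2_T_quasigroup_is_medial {Q : Type*} [AddCommGroup Q]
    (φ ψ : Q ≃+ Q) (b : Q) (mul : Q → Q → Q)
    (hmul : ∀ x y, mul x y = φ x + ψ y + b)
    (hT2 : ∀ x y, mul x (mul y (mul y x)) = y) :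
    ∀ x, φ (ψ x) = ψ (φ x) := by
  have key : ∀ x : Q, φ x = -ψ (ψ (ψ x)) := by
    intro x
    have h0 := hT2 0 0
    have hx := hT2 x 0
    simp only [hmul, map_add, map_zero, zero_add, add_zero] at h0 hx
    have h2 : φ x + ψ (ψ (ψ x)) + (ψ (ψ b) + ψ b + b) = 0 := by
      rw [← hx]; abel
    rw [h0, add_zero] at h2
    exact eq_neg_of_add_eq_zero_left h2
  intro x
  rw [key (ψ x), key x, map_neg]
end

section
/- Let r ≥ 1 and k be integers such that k⁵ + k⁴ + 1 ≡ 0 (mod r), gcd(k, r) = 1, and let b ∈ ℤ/rℤ satisfy k²·b + k·b + b ≡ 0 (mod r). Then the operation x ∘ y = -k³·x + k·y + b on ℤ/rℤ satisfies the identity x ∘ (y ∘ (y ∘ x)) = y for all x, y ∈ ℤ/rℤ, and for each fixed a, both x ↦ x ∘ a and y ↦ a ∘ y are bijections of ℤ/rℤ. -/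
/-!
The composite `x ∘ (y ∘ (y ∘ x))` is again affine in `x` and `y`: its `x`-terms cancel, the
coefficient of `y` is `-(k⁵ + k⁴) = 1` and its constant term is `(k² + k + 1) b = 0`.
The translations are affine maps with linear parts `-k³` and `k`, which are units of `ℤ/rℤ`
because `k` is coprime to `r`.
-/

open Function

theorem bijective_mul_add_of_isUnit {R : Type*} [Ring R] {u : R} (hu : IsUnit u) (c : R) :
    Bijective fun x => u * x + c :=
  (AddGroup.addRight_bijective c).comp (IsUnit.isUnit_iff_mulLeft_bijective.mp hu)

section AffineOp

variable {R : Type*} [CommRing R] {k b : R}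

def affineOp (k b : R) (x y : R) : R := -k ^ 3 * x + k * y + b

theorem affineOp_t2_identity (hk : k ^ 5 + k ^ 4 + 1 = 0) (hb : k ^ 2 * b + k * b + b = 0)
    (x y : R) : affineOp k b x (affineOp k b y (affineOp k b y x)) = y := by
  unfold affineOp
  linear_combination (-y) * hk + hb

theorem affineOp_left_bijective (hk : IsUnit k) (a : R) :
    Bijective fun x => affineOp k b x a := by
  simpa only [affineOp, add_assoc] using bijective_mul_add_of_isUnit (hk.pow 3).neg (k * a + b)

theorem affineOp_right_bijective (hk : IsUnit k) (a : R) :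
    Bijective fun y => affineOp k b a y := by
  convert bijective_mul_add_of_isUnit hk (-k ^ 3 * a + b) using 2
  unfold affineOp
  ring

end AffineOp

theorem ZMod.isUnit_intCast_of_gcd_eq_one {k : ℤ} {r : ℕ} (h : Int.gcd k r = 1) :
    IsUnit (k : ZMod r) :=
  (ZMod.coe_int_isUnit_iff_isCoprime k r).2 (Int.isCoprime_iff_gcd_eq_one.2 (by rwa [Int.gcd_comm]))

theorem t2_quasigroup_from_residue_ring_general (r : ℕ) (k : ℤ)
    (hf : (r : ℤ) ∣ k ^ 5 + k ^ 4 + 1) (hgcd : Int.gcd k r = 1)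
    (b : ZMod r) (hb : (k : ZMod r) ^ 2 * b + (k : ZMod r) * b + b = 0)
    (op : ZMod r → ZMod r → ZMod r)
    (hop : ∀ x y, op x y = -(k : ZMod r) ^ 3 * x + (k : ZMod r) * y + b) :
    (∀ x y, op x (op y (op y x)) = y) ∧
    (∀ a, Function.Bijective (fun x => op x a)) ∧
    (∀ a, Function.Bijective (fun y => op a y)) := by
  obtain rfl : op = affineOp (k : ZMod r) b := funext₂ hop
  have hk : (k : ZMod r) ^ 5 + (k : ZMod r) ^ 4 + 1 = 0 := by
    exact_mod_cast (ZMod.intCast_zmod_eq_zero_iff_dvd _ r).2 hf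
  have hunit := ZMod.isUnit_intCast_of_gcd_eq_one hgcd
  exact ⟨affineOp_t2_identity hk hb, affineOp_left_bijective hunit,
    affineOp_right_bijective hunit⟩

theorem t2_quasigroup_from_residue_ring (r : ℕ) (hr : 1 ≤ r) (k : ℤ)
    (hf : (r : ℤ) ∣ k ^ 5 + k ^ 4 + 1) (hgcd : Int.gcd k r = 1)
    (b : ZMod r) (hb : (k : ZMod r) ^ 2 * b + (k : ZMod r) * b + b = 0)
    (op : ZMod r → ZMod r → ZMod r)
    (hop : ∀ x y, op x y = -(k : ZMod r) ^ 3 * x + (k : ZMod r) * y + b) :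
    (∀ x y, op x (op y (op y x)) = y) ∧
    (∀ a, Function.Bijective (fun x => op x a)) ∧
    (∀ a, Function.Bijective (fun y => op a y)) :=
  t2_quasigroup_from_residue_ring_general r k hf hgcd b hb op hop
end

section
/- For every integer k ≥ 2 there exists a quasigroup of order 2^k satisfying the identity x · (y · (y · x)) = y. -/
/-- The statement we want for a given order exponent. -/
def T2P (k : ℕ) : Prop :=
  ∃ (Q : Type) (inst : Fintype Q) (op : Q → Q → Q),
      @Fintype.card Q inst = 2 ^ k ∧
      (∀ a, Function.Bijective (fun x => op a x)) ∧
      (∀ a, Function.Bijective (fun x => op x a)) ∧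
      (∀ x y, op x (op y (op y x)) = y)

/-- Order 4 T₂ quasigroup on (ℤ/2)², coming from x + βy over GF(4). -/
def op4 (x y : ZMod 2 × ZMod 2) : ZMod 2 × ZMod 2 :=
  (x.1 + y.2, x.2 + y.1 + y.2)

/-- Order 8 T₂ quasigroup on (ℤ/2)³: x·y = Mx + Ny with N⁴+N⁵ = I, M = N³. -/
def op8 (x y : ZMod 2 × ZMod 2 × ZMod 2) : ZMod 2 × ZMod 2 × ZMod 2 :=
  (x.2.1 + x.2.2 + y.1 + y.2.1 + y.2.2,
   x.1 + y.1 + y.2.1,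
   x.1 + x.2.2 + y.1)

lemma t2p_two : T2P 2 := by
  refine ⟨ZMod 2 × ZMod 2, inferInstance, op4, by decide, ?_, ?_, by decide⟩
  · intro a
    rw [Fintype.bijective_iff_injective_and_card]
    exact ⟨fun x y h => by revert h; revert a x y; decide, rfl⟩
  · intro a
    rw [Fintype.bijective_iff_injective_and_card]
    exact ⟨fun x y h => by revert h; revert a x y; decide, rfl⟩

lemma t2p_three : T2P 3 := by
  refine ⟨ZMod 2 × ZMod 2 × ZMod 2, inferInstance, op8, by decide, ?_, ?_, by decide⟩
  · intro a
    rw [Fintype.bijective_iff_injective_and_card]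
    exact ⟨fun x y h => by revert h; revert a x y; decide, rfl⟩
  · intro a
    rw [Fintype.bijective_iff_injective_and_card]
    exact ⟨fun x y h => by revert h; revert a x y; decide, rfl⟩

lemma t2p_step {k : ℕ} (h : T2P k) : T2P (k + 2) := by
  obtain ⟨Q, instQ, op, hcard, hl, hr, hid⟩ := h
  obtain ⟨R, instR, op', hcard', hl', hr', hid'⟩ := t2p_two
  refine ⟨Q × R, @instFintypeProd Q R instQ instR,
    fun x y => (op x.1 y.1, op' x.2 y.2), ?_, ?_, ?_, ?_⟩
  · rw [@Fintype.card_prod Q R instQ instR, hcard, hcard', pow_add]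
  · intro a
    exact Function.Bijective.prodMap (hl a.1) (hl' a.2)
  · intro a
    exact Function.Bijective.prodMap (hr a.1) (hr' a.2)
  · intro x y
    exact Prod.ext (hid x.1 y.1) (hid' x.2 y.2)

lemma t2p_all : ∀ n, T2P (n + 2) ∧ T2P (n + 3) := by
  intro n
  induction n with
  | zero => exact ⟨t2p_two, t2p_three⟩
  | succ m ih => exact ⟨ih.2, by simpa [show m + 1 + 3 = m + 2 + 2 by omega] using t2p_step ih.1⟩

theorem t2_quasigroup_of_order_two_pow (k : ℕ) (hk : 2 ≤ k) :
    ∃ (Q : Type) (inst : Fintype Q) (op : Q → Q → Q),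
      @Fintype.card Q inst = 2 ^ k ∧
      (∀ a, Function.Bijective (fun x => op a x)) ∧
      (∀ a, Function.Bijective (fun x => op x a)) ∧
      (∀ x y, op x (op y (op y x)) = y) := by
  have := (t2p_all (k - 2)).1
  rw [show k - 2 + 2 = k by omega] at this
  exact this
end
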